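/- For all P, Q ∈ pCSP: (1) if P ⊑^L Q then P ⊑_S Q; (2) if P ⊑^F Q then P ⊑_FS Q. -/

import Mathlib

/-!
The proof goes through characteristic formulas. A well-formed state `s` has finitely many
transitions, so it has a formula `φ_s` which is the conjunction of `⟨a⟩ φ_Δ` over its visible
transitions `s --a--> Δ`, of `φ_Θ` over its τ-transitions `s --τ--> Θ`, and, when `s` is
stable, of `ref X` for the set `X` of actions it refuses (the `L`-formula `ψ_s` omits this
conjunct); here `φ_Δ` is the probabilistic combination `⊕_{t ∈ supp Δ} Δ(t) · φ_t`. The recursion is along derivatives,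
which are strictly smaller terms. Every distribution satisfies its own formula, and
"`Θ` satisfies a well-formed characteristic formula of `s`" is a (failure) simulation: each
transition of `s` is matched by the corresponding conjunct, and the refusal conjunct of a stable
state yields the failure clause. So if `⟦P⟧ ⊨ ψ_⟦P⟧` transfers to `⟦Q⟧`, the formula unfolds
to `⟦Q⟧ ==τ̂==> Θ` with `⟦P⟧` related to `Θ` by the lifted simulation; for `⊑^F` the roles of
`P` and `Q` are exchanged.
-/

open Classical

noncomputable section

namespace PaperPCSP

/-! ### Finitely supported distributions as weight functions -/

/-- Weight functions on `X`; probability distributions are those satisfying `IsDist`. -/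
abbrev Wt (X : Type) := X → ℝ

/-- The support of a weight function. -/
def dsupp {X : Type} (Δ : Wt X) : Set X := Function.support Δ

/-- `Δ` is a finitely supported probability distribution. -/
def IsDist {X : Type} (Δ : Wt X) : Prop :=
  (∀ x, 0 ≤ Δ x) ∧ (dsupp Δ).Finite ∧ ∑ᶠ x, Δ x = 1

/-- The point distribution at `x`. -/
def dirac {X : Type} (x : X) : Wt X := fun y => if y = x then 1 else 0

/-- Pushforward of a weight function along a map. -/
def dmap {X Y : Type} (g : X → Y) (Δ : Wt X) : Wt Y :=
  fun y => ∑ᶠ x ∈ {x | g x = y}, Δ x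

/-- Expected value of `f` under `Δ`. -/
def dexp {X : Type} (Δ : Wt X) (f : X → ℝ) : ℝ := ∑ᶠ x, Δ x * f x

/-! ### Syntax of pCSP -/

mutual
/-- Process terms of pCSP (over prefix alphabet `A`). -/
inductive PCSP (A : Type) : Type where
  | st : SCSP A → PCSP A
  | pch : ℝ → PCSP A → PCSP A → PCSP A
/-- State-based process terms of pCSP. -/
inductive SCSP (A : Type) : Type where
  | nil : SCSP A
  | pre : A → PCSP A → SCSP A
  | ich : PCSP A → PCSP A → SCSP A
  | ech : SCSP A → SCSP A → SCSP A
  | par : Set A → SCSP A → SCSP A → SCSP A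
end

mutual
/-- Well-formedness: all probabilistic choices have `p ∈ (0,1)`.  `pCSP` proper
consists of the well-formed terms. -/
inductive PWF : {A : Type} → PCSP A → Prop where
  | st {A} {s : SCSP A} : SWF s → PWF (.st s)
  | pch {A} {p : ℝ} {P Q : PCSP A} : 0 < p → p < 1 → PWF P → PWF Q → PWF (.pch p P Q)
inductive SWF : {A : Type} → SCSP A → Prop where
  | nil {A} : SWF (SCSP.nil (A := A))
  | pre {A} {a : A} {P} : PWF P → SWF (.pre a P)
  | ich {A} {P Q : PCSP A} : PWF P → PWF Q → SWF (.ich P Q)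
  | ech {A} {s t : SCSP A} : SWF s → SWF t → SWF (.ech s t)
  | par {A} {B : Set A} {s t : SCSP A} : SWF s → SWF t → SWF (.par B s t)
end

/-- Interpretation of process terms as distributions over state-based terms. -/
def PCSP.interp {A : Type} : PCSP A → Wt (SCSP A)
  | .st s => dirac s
  | .pch p P Q => fun t => p * P.interp t + (1 - p) * Q.interp t

/-! ### Operational semantics -/

/-- The probabilistic labelled transition relation; `none` is the internal action τ. -/
inductive Step {A : Type} : SCSP A → Option A → Wt (SCSP A) → Prop where
  | pre (a : A) (P : PCSP A) : Step (.pre a P) (some a) P.interp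
  | ichL (P Q : PCSP A) : Step (.ich P Q) none P.interp
  | ichR (P Q : PCSP A) : Step (.ich P Q) none Q.interp
  | echL {s₁ s₂ : SCSP A} {a : A} {Δ} :
      Step s₁ (some a) Δ → Step (.ech s₁ s₂) (some a) Δ
  | echR {s₁ s₂ : SCSP A} {a : A} {Δ} :
      Step s₂ (some a) Δ → Step (.ech s₁ s₂) (some a) Δ
  | echTL {s₁ s₂ : SCSP A} {Δ} :
      Step s₁ none Δ → Step (.ech s₁ s₂) none (dmap (fun t => .ech t s₂) Δ)
  | echTR {s₁ s₂ : SCSP A} {Δ} :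
      Step s₂ none Δ → Step (.ech s₁ s₂) none (dmap (fun t => .ech s₁ t) Δ)
  | parL {B : Set A} {s₁ s₂ : SCSP A} {α : Option A} {Δ} :
      Step s₁ α Δ → (∀ a, α = some a → a ∉ B) →
      Step (.par B s₁ s₂) α (dmap (fun t => .par B t s₂) Δ)
  | parR {B : Set A} {s₁ s₂ : SCSP A} {α : Option A} {Δ} :
      Step s₂ α Δ → (∀ a, α = some a → a ∉ B) →
      Step (.par B s₁ s₂) α (dmap (fun t => .par B s₁ t) Δ)
  | parS {B : Set A} {s₁ s₂ : SCSP A} {a : A} {Δ₁ Δ₂} :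
      a ∈ B → Step s₁ (some a) Δ₁ → Step s₂ (some a) Δ₂ →
      Step (.par B s₁ s₂) none
        (dmap (fun q : SCSP A × SCSP A => .par B q.1 q.2) (fun q => Δ₁ q.1 * Δ₂ q.2))

/-! ### Lifting relations to distributions, weak transitions -/

/-- Lifting of a state-vs-distribution relation to distributions. -/
def Lift {A : Type} (R : SCSP A → Wt (SCSP A) → Prop) (Δ Θ : Wt (SCSP A)) : Prop :=
  ∃ (n : ℕ) (p : Fin n → ℝ) (s : Fin n → SCSP A) (Φ : Fin n → Wt (SCSP A)),
    (∀ i, 0 ≤ p i) ∧ (∑ i, p i = 1) ∧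
    (Δ = fun t => ∑ i, p i * dirac (s i) t) ∧
    (∀ i, R (s i) (Φ i)) ∧
    (Θ = fun t => ∑ i, p i * Φ i t)

/-- The transition relation lifted to distributions. -/
def StepD {A : Type} (α : Option A) : Wt (SCSP A) → Wt (SCSP A) → Prop :=
  Lift (fun s Δ => Step s α Δ)

/-- `s --τ̂--> Δ` : a τ-step or staying put. -/
def stepTauHat {A : Type} (s : SCSP A) (Δ : Wt (SCSP A)) : Prop :=
  Step s none Δ ∨ Δ = dirac s

/-- `==τ̂==>` : reflexive-transitive closure of the lifted `--τ̂-->`. -/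
def TauStar {A : Type} : Wt (SCSP A) → Wt (SCSP A) → Prop :=
  Relation.ReflTransGen (Lift stepTauHat)

/-- `Δ ==â==> Θ` for a visible action `a`. -/
def WeakA {A : Type} (a : A) (Δ Θ : Wt (SCSP A)) : Prop :=
  ∃ Δ₁ Δ₂, TauStar Δ Δ₁ ∧ StepD (some a) Δ₁ Δ₂ ∧ TauStar Δ₂ Θ

/-- `Δ ==α̂==> Θ`, which is `==τ̂==>` when `α = τ`. -/
def Weak {A : Type} : Option A → Wt (SCSP A) → Wt (SCSP A) → Prop
  | none => TauStar
  | some a => WeakA a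

/-- `s ↛X` : the state `s` enables no action from `X ∪ {τ}`. -/
def SRefuses {A : Type} (s : SCSP A) (X : Set A) : Prop :=
  (∀ Δ, ¬ Step s none Δ) ∧ ∀ a ∈ X, ∀ Δ, ¬ Step s (some a) Δ

/-- `Δ ↛X` : every state in the support of `Δ` refuses `X`. -/
def DRefuses {A : Type} (Δ : Wt (SCSP A)) (X : Set A) : Prop :=
  ∀ s ∈ dsupp Δ, SRefuses s X

/-! ### Simulation and failure simulation -/

/-- `R` is a simulation. -/
def IsSimulation {A : Type} (R : SCSP A → Wt (SCSP A) → Prop) : Prop :=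
  ∀ s Θ α Δ, R s Θ → Step s α Δ → ∃ Θ', Weak α Θ Θ' ∧ Lift R Δ Θ'

/-- `R` is a failure simulation. -/
def IsFailureSim {A : Type} (R : SCSP A → Wt (SCSP A) → Prop) : Prop :=
  IsSimulation R ∧
  ∀ s Θ (X : Set A), R s Θ → SRefuses s X → ∃ Θ', TauStar Θ Θ' ∧ DRefuses Θ' X

/-- `s ⊲_S Θ`. -/
def simLE {A : Type} (s : SCSP A) (Θ : Wt (SCSP A)) : Prop :=
  ∃ R, IsSimulation R ∧ R s Θ

/-- `s ⊲_FS Θ`. -/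
def fsimLE {A : Type} (s : SCSP A) (Θ : Wt (SCSP A)) : Prop :=
  ∃ R, IsFailureSim R ∧ R s Θ

/-- The simulation preorder `P ⊑_S Q`. -/
def SimPre {A : Type} (P Q : PCSP A) : Prop :=
  ∃ Θ, TauStar Q.interp Θ ∧ Lift simLE P.interp Θ

/-- The failure simulation preorder `P ⊑_FS Q`. -/
def FSimPre {A : Type} (P Q : PCSP A) : Prop :=
  ∃ Θ, TauStar P.interp Θ ∧ Lift fsimLE Q.interp Θ
/-! ### Syntactic operations: renaming, and ◻ / ∥ distributed over probabilistic choice -/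

mutual
/-- Renaming of actions in a process term. -/
def mapP {A B : Type} (f : A → B) : PCSP A → PCSP B
  | .st s => .st (mapS f s)
  | .pch p P Q => .pch p (mapP f P) (mapP f Q)
def mapS {A B : Type} (f : A → B) : SCSP A → SCSP B
  | .nil => .nil
  | .pre a P => .pre (f a) (mapP f P)
  | .ich P Q => .ich (mapP f P) (mapP f Q)
  | .ech s t => .ech (mapS f s) (mapS f t)
  | .par X s t => .par (f '' X) (mapS f s) (mapS f t)
end

/-- `s ∥_B Q` for a state `s`, distributing over probabilistic choice. -/
def parCS {A : Type} (B : Set A) (s : SCSP A) : PCSP A → PCSP A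
  | .st t => .st (.par B s t)
  | .pch p Q₁ Q₂ => .pch p (parCS B s Q₁) (parCS B s Q₂)

/-- `P ∥_B Q` on processes, distributing over probabilistic choice. -/
def parC {A : Type} (B : Set A) : PCSP A → PCSP A → PCSP A
  | .st s, Q => parCS B s Q
  | .pch p P₁ P₂, Q => .pch p (parC B P₁ Q) (parC B P₂ Q)

/-- `s ◻ Q` for a state `s`, distributing over probabilistic choice. -/
def echCS {A : Type} (s : SCSP A) : PCSP A → PCSP A
  | .st t => .st (.ech s t)
  | .pch p Q₁ Q₂ => .pch p (echCS s Q₁) (echCS s Q₂)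

/-- `P ◻ Q` on processes, distributing over probabilistic choice. -/
def echC {A : Type} : PCSP A → PCSP A → PCSP A
  | .st s, Q => echCS s Q
  | .pch p P₁ P₂, Q => .pch p (echC P₁ Q) (echC P₂ Q)

/-- Finite (nonempty) indexed internal choice `⨅_{i} P i`. -/
def ichFin {A : Type} : (n : ℕ) → (Fin (n+1) → PCSP A) → PCSP A
  | 0, P => P 0
  | n+1, P => .st (.ich (P 0) (ichFin n (fun i => P i.succ)))

/-- Finite (nonempty) indexed probabilistic choice `⊕_{i} p i · P i`. -/
def pchFin {A : Type} : (n : ℕ) → (Fin (n+1) → ℝ) → (Fin (n+1) → PCSP A) → PCSP A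
  | 0, _, P => P 0
  | n+1, p, P => .pch (p 0) (P 0)
      (pchFin n (fun i => p i.succ / (1 - p 0)) (fun i => P i.succ))

/-- Finite (nonempty) indexed external choice of states `◻_{i} s i`. -/
def echFin {A : Type} : (n : ℕ) → (Fin (n+1) → SCSP A) → SCSP A
  | 0, s => s 0
  | n+1, s => .ech (s 0) (echFin n (fun i => s i.succ))

/-- External choice of a list of states (empty list gives `0`). -/
def echList {A : Type} : List (SCSP A) → SCSP A
  | [] => .nil
  | s :: l => .ech s (echList l)

/-! ### State-based scalar testing -/

/-- The alphabet `Act ∪ {ω}` for ordinary (scalar) tests. -/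
abbrev TAct (A : Type) := Sum A Unit

/-- The success action ω. -/
def omA {A : Type} : TAct A := Sum.inr ()

/-- Membership in the state-based results-gathering function `V` (with success action `w`). -/
inductive VMem {B : Type} (w : B) : SCSP B → ℝ → Prop where
  | succ {s : SCSP B} {Δ} : Step s (some w) Δ → VMem w s 1
  | step {s : SCSP B} {α : Option B} {Δ} (f : SCSP B → ℝ) :
      (∀ Θ, ¬ Step s (some w) Θ) → Step s α Δ →
      (∀ t ∈ dsupp Δ, VMem w t (f t)) → VMem w s (dexp Δ f)
  | stuck {s : SCSP B} : (∀ α Δ, ¬ Step s α Δ) → VMem w s 0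

/-- `V(Δ)` : the set of outcomes of a distribution, via choice functions. -/
def VD {B : Type} (w : B) (Δ : Wt (SCSP B)) : Set ℝ :=
  {r | ∃ f : SCSP B → ℝ, (∀ t ∈ dsupp Δ, VMem w t (f t)) ∧ r = dexp Δ f}

/-- The application `T ∥_Act P` of a test to a process. -/
def applyTest {A : Type} (T : PCSP (TAct A)) (P : PCSP A) : PCSP (TAct A) :=
  parC (Set.range Sum.inl) T (mapP Sum.inl P)

/-- `A(T,P)` : state-based testing outcomes. -/
def Aset {A : Type} (T : PCSP (TAct A)) (P : PCSP A) : Set ℝ :=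
  VD omA (applyTest T P).interp

/-- The Hoare preorder on sets of reals. -/
def HoareLE (X Y : Set ℝ) : Prop := ∀ x ∈ X, ∃ y ∈ Y, x ≤ y

/-- The Smyth preorder on sets of reals. -/
def SmythLE (X Y : Set ℝ) : Prop := ∀ y ∈ Y, ∃ x ∈ X, x ≤ y

/-- The may-testing preorder `⊑_pmay`. -/
def PMay {A : Type} (P Q : PCSP A) : Prop :=
  ∀ T : PCSP (TAct A), PWF T → HoareLE (Aset T P) (Aset T Q)

/-- The must-testing preorder `⊑_pmust`. -/
def PMust {A : Type} (P Q : PCSP A) : Prop :=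
  ∀ T : PCSP (TAct A), PWF T → SmythLE (Aset T P) (Aset T Q)

/-! ### Action-based scalar testing -/

/-- Membership in the action-based results-gathering function `V̄`. -/
inductive VBarMem {B : Type} (w : B) : SCSP B → ℝ → Prop where
  | succ {s : SCSP B} {Δ} : Step s (some w) Δ → VBarMem w s 1
  | step {s : SCSP B} {α : Option B} {Δ} (f : SCSP B → ℝ) :
      α ≠ some w → Step s α Δ →
      (∀ t ∈ dsupp Δ, VBarMem w t (f t)) → VBarMem w s (dexp Δ f)
  | stuck {s : SCSP B} : (∀ α Δ, ¬ Step s α Δ) → VBarMem w s 0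

/-- `V̄(Δ)`. -/
def VBarD {B : Type} (w : B) (Δ : Wt (SCSP B)) : Set ℝ :=
  {r | ∃ f : SCSP B → ℝ, (∀ t ∈ dsupp Δ, VBarMem w t (f t)) ∧ r = dexp Δ f}

/-- `Ā(T,P)` : action-based testing outcomes. -/
def AsetBar {A : Type} (T : PCSP (TAct A)) (P : PCSP A) : Set ℝ :=
  VBarD omA (applyTest T P).interp

/-- The action-based may-testing preorder `⊑̄_pmay`. -/
def PMayBar {A : Type} (P Q : PCSP A) : Prop :=
  ∀ T : PCSP (TAct A), PWF T → HoareLE (AsetBar T P) (AsetBar T Q)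

/-- The action-based must-testing preorder `⊑̄_pmust`. -/
def PMustBar {A : Type} (P Q : PCSP A) : Prop :=
  ∀ T : PCSP (TAct A), PWF T → SmythLE (AsetBar T P) (AsetBar T Q)
/-! ### ω-avoiding transitions and the relation ⊲ᵉ_FS -/

/-- `s --α-->_ω Δ` : a transition from a state not enabling the success action `w`. -/
def StepOmega {B : Type} (w : B) (s : SCSP B) (α : Option B) (Δ : Wt (SCSP B)) : Prop :=
  (∀ Θ, ¬ Step s (some w) Θ) ∧ Step s α Δ

/-- `s --τ̂-->_ω Δ`. -/
def stepTauHatOm {B : Type} (w : B) (s : SCSP B) (Δ : Wt (SCSP B)) : Prop :=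
  StepOmega w s none Δ ∨ Δ = dirac s

/-- `==τ̂==>_ω`. -/
def TauStarOm {B : Type} (w : B) : Wt (SCSP B) → Wt (SCSP B) → Prop :=
  Relation.ReflTransGen (Lift (stepTauHatOm w))

/-- `==â==>_ω` for a visible action `a`. -/
def WeakAOm {B : Type} (w : B) (a : B) (Δ Θ : Wt (SCSP B)) : Prop :=
  ∃ Δ₁ Δ₂, TauStarOm w Δ Δ₁ ∧
    Lift (fun s Φ => StepOmega w s (some a) Φ) Δ₁ Δ₂ ∧ TauStarOm w Δ₂ Θ

/-- `==α̂==>_ω`. -/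
def WeakOm {B : Type} (w : B) : Option B → Wt (SCSP B) → Wt (SCSP B) → Prop
  | none => TauStarOm w
  | some a => WeakAOm w a

/-- A postfixed point for the coinductive definition of `⊲ᵉ_FS`. -/
def IsEFailSim {B : Type} (w : B) (R : SCSP B → Wt (SCSP B) → Prop) : Prop :=
  (∀ s Θ α Δ, R s Θ → StepOmega w s α Δ → ∃ Θ', WeakOm w α Θ Θ' ∧ Lift R Δ Θ') ∧
  (∀ s Θ (X : Set B), R s Θ → w ∈ X → SRefuses s X →
    ∃ Θ', TauStarOm w Θ Θ' ∧ DRefuses Θ' X)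

/-- `s ⊲ᵉ_FS Θ` : the largest relation satisfying the transfer properties. -/
def efsimLE {B : Type} (w : B) (s : SCSP B) (Θ : Wt (SCSP B)) : Prop :=
  ∃ R, IsEFailSim w R ∧ R s Θ

/-! ### Vector-based testing with success actions from Ω -/

/-- `α!o` : update the `α`-component of the outcome tuple to 1 if `α` is a success action. -/
def bang {A Om : Type} (α : Option (Sum A Om)) (o : Om → ℝ) : Om → ℝ :=
  fun w => if α = some (Sum.inr w) then 1 else o w

mutual
/-- Membership in the vector-based convex-closed results-gathering function `V̄↕^Ω`
for states.  -/
inductive WMem : {A Om : Type} → SCSP (Sum A Om) → (Om → ℝ) → Prop where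
  | stuck {A Om : Type} {s : SCSP (Sum A Om)} :
      (∀ α Δ, ¬ Step s α Δ) → WMem s (fun _ => 0)
  | step {A Om : Type} {s : SCSP (Sum A Om)} {n : ℕ}
      (p : Fin (n+1) → ℝ) (α : Fin (n+1) → Option (Sum A Om))
      (Δ : Fin (n+1) → Wt (SCSP (Sum A Om))) (o : Fin (n+1) → Om → ℝ) :
      (∀ i, 0 ≤ p i) → (∑ i, p i = 1) →
      (∀ i, Step s (α i) (Δ i)) →
      (∀ i, WMemD (Δ i) (o i)) →
      WMem s (fun w => ∑ i, p i * bang (α i) (o i) w)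
/-- Membership in `V̄↕^Ω` for distributions. -/
inductive WMemD : {A Om : Type} → Wt (SCSP (Sum A Om)) → (Om → ℝ) → Prop where
  | mk {A Om : Type} {Δ : Wt (SCSP (Sum A Om))} (f : SCSP (Sum A Om) → Om → ℝ) :
      (∀ t ∈ dsupp Δ, WMem t (f t)) → WMemD Δ (fun w => ∑ᶠ t, Δ t * f t w)
end

/-- `V̄↕^Ω(Δ)` as a set of outcome tuples. -/
def WsetD {A Om : Type} (Δ : Wt (SCSP (Sum A Om))) : Set (Om → ℝ) :=
  {o | WMemD Δ o}

/-- The application `T ∥_Act P` of an Ω-test to a process. -/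
def applyTestO {A Om : Type} (T : PCSP (Sum A Om)) (P : PCSP A) : PCSP (Sum A Om) :=
  parC (Set.range Sum.inl) T (mapP Sum.inl P)

/-- `A↕^Ω(T,P)` : vector-based testing outcomes of a process. -/
def AO {A Om : Type} (T : PCSP (Sum A Om)) (P : PCSP A) : Set (Om → ℝ) :=
  WsetD (applyTestO T P).interp

/-- `A↕^Ω(T,Δ)` for a distribution `Δ ∈ D(sCSP)`, via expected values. -/
def AOD {A Om : Type} (T : PCSP (Sum A Om)) (Δ : Wt (SCSP A)) : Set (Om → ℝ) :=
  {o | ∃ g : SCSP A → Om → ℝ,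
    (∀ s ∈ dsupp Δ, g s ∈ AO T (.st s)) ∧ o = fun w => ∑ᶠ s, Δ s * g s w}

/-- Hoare preorder on sets of outcome tuples (componentwise order). -/
def HoareLEV {Om : Type} (X Y : Set (Om → ℝ)) : Prop := ∀ x ∈ X, ∃ y ∈ Y, x ≤ y

/-- Smyth preorder on sets of outcome tuples (componentwise order). -/
def SmythLEV {Om : Type} (X Y : Set (Om → ℝ)) : Prop := ∀ y ∈ Y, ∃ x ∈ X, x ≤ y

/-- The vector-based may-testing preorder `⊑̄^Ω_pmay`. -/
def PMayO {A : Type} (Om : Type) (P Q : PCSP A) : Prop :=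
  ∀ T : PCSP (Sum A Om), PWF T → HoareLEV (AO T P) (AO T Q)

/-- The vector-based must-testing preorder `⊑̄^Ω_pmust`. -/
def PMustO {A : Type} (Om : Type) (P Q : PCSP A) : Prop :=
  ∀ T : PCSP (Sum A Om), PWF T → SmythLEV (AO T P) (AO T Q)

/-- The unit outcome vector `ω⃗`. -/
def unitVec {Om : Type} (w : Om) : Om → ℝ := fun w' => if w' = w then 1 else 0

/-! Occurrence of an action in a process term. -/
mutual
/-- Occurrence of an action in a process term. -/
inductive PUses : {B : Type} → B → PCSP B → Prop where
  | st {B : Type} {b : B} {s} : SUses b s → PUses b (.st s)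
  | pchL {B : Type} {b : B} {p P Q} : PUses b P → PUses b (.pch p P Q)
  | pchR {B : Type} {b : B} {p P Q} : PUses b Q → PUses b (.pch p P Q)
inductive SUses : {B : Type} → B → SCSP B → Prop where
  | preAct {B : Type} {b : B} {P} : SUses b (.pre b P)
  | pre {B : Type} {b : B} {a P} : PUses b P → SUses b (.pre a P)
  | ichL {B : Type} {b : B} {P Q} : PUses b P → SUses b (.ich P Q)
  | ichR {B : Type} {b : B} {P Q} : PUses b Q → SUses b (.ich P Q)
  | echL {B : Type} {b : B} {s t} : SUses b s → SUses b (.ech s t)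
  | echR {B : Type} {b : B} {s t} : SUses b t → SUses b (.ech s t)
  | parSet {B : Type} {b : B} {X s t} : b ∈ X → SUses b (.par X s t)
  | parL {B : Type} {b : B} {X s t} : SUses b s → SUses b (.par X s t)
  | parR {B : Type} {b : B} {X s t} : SUses b t → SUses b (.par X s t)
end
/-! ### The modal logic F -/

/-- Modal formulae of the logic `F`. -/
inductive Form (A : Type) : Type where
  | ref : Set A → Form A
  | dia : A → Form A → Form A
  | conj : (n : ℕ) → (Fin n → Form A) → Form A
  | prob : (n : ℕ) → (Fin n → ℝ) → (Fin n → Form A) → Form A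

/-- Well-formed formulae: probabilistic choices carry genuine distributions. -/
inductive WFF {A : Type} : Form A → Prop where
  | ref {X} : WFF (.ref X)
  | dia {a φ} : WFF φ → WFF (.dia a φ)
  | conj {n φs} : (∀ i, WFF (φs i)) → WFF (.conj n φs)
  | prob {n p φs} : (∀ i, 0 ≤ p i) → (∑ i, p i = 1) →
      (∀ i, WFF (φs i)) → WFF (.prob n p φs)

/-- Formulae of the sublogic `L`: no refusal construct. -/
inductive NoRef {A : Type} : Form A → Prop where
  | dia {a φ} : NoRef φ → NoRef (.dia a φ)
  | conj {n φs} : (∀ i, NoRef (φs i)) → NoRef (.conj n φs)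
  | prob {n p φs} : (∀ i, NoRef (φs i)) → NoRef (.prob n p φs)

/-- The satisfaction relation `Δ ⊨ φ`. -/
inductive Sat {A : Type} : Form A → Wt (SCSP A) → Prop where
  | ref {X : Set A} {Δ Δ'} : TauStar Δ Δ' → DRefuses Δ' X → Sat (.ref X) Δ
  | dia {a φ Δ Δ'} : WeakA a Δ Δ' → Sat φ Δ' → Sat (.dia a φ) Δ
  | conj {n φs Δ} : (∀ i, Sat (φs i) Δ) → Sat (.conj n φs) Δ
  | prob {n} {p : Fin n → ℝ} {φs Δ} (Δs : Fin n → Wt (SCSP A)) :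
      (∀ i, Sat (φs i) (Δs i)) →
      TauStar Δ (fun t => ∑ i, p i * Δs i t) →
      Sat (.prob n p φs) Δ

/-- The logical preorder `⊑^L`. -/
def LPre {A : Type} (P Q : PCSP A) : Prop :=
  ∀ φ : Form A, WFF φ → NoRef φ → Sat φ P.interp → Sat φ Q.interp

/-- The logical preorder `⊑^F`. -/
def FPre {A : Type} (P Q : PCSP A) : Prop :=
  ∀ φ : Form A, WFF φ → Sat φ Q.interp → Sat φ P.interp

mutual
/-- `CharS s φ` : `φ` is an F-characteristic formula `φ_s` of the state `s`. -/
inductive CharS : {A : Type} → SCSP A → Form A → Prop where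
  | noTau {A : Type} {s : SCSP A} (n : ℕ) (a : Fin n → A)
      (Δ : Fin n → Wt (SCSP A)) (φ : Fin n → Form A) :
      (∀ Θ, ¬ Step s none Θ) →
      (∀ i, Step s (some (a i)) (Δ i)) →
      (∀ b Θ, Step s (some b) Θ → ∃ i, a i = b ∧ Δ i = Θ) →
      (∀ i, CharD (Δ i) (φ i)) →
      CharS s (.conj (n+1) (Fin.snoc (fun i => .dia (a i) (φ i))
        (.ref {b : A | ∀ Θ, ¬ Step s (some b) Θ})))
  | tau {A : Type} {s : SCSP A} (n m : ℕ) (a : Fin n → A)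
      (Δ : Fin n → Wt (SCSP A)) (φ : Fin n → Form A)
      (Θs : Fin m → Wt (SCSP A)) (ψ : Fin m → Form A) :
      (∃ Θ, Step s none Θ) →
      (∀ i, Step s (some (a i)) (Δ i)) →
      (∀ b Θ, Step s (some b) Θ → ∃ i, a i = b ∧ Δ i = Θ) →
      (∀ j, Step s none (Θs j)) →
      (∀ Θ, Step s none Θ → ∃ j, Θs j = Θ) →
      (∀ i, CharD (Δ i) (φ i)) →
      (∀ j, CharD (Θs j) (ψ j)) →
      CharS s (.conj (n+m) (Fin.append (fun i => .dia (a i) (φ i)) ψ))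
/-- `CharD Δ φ` : `φ` is an F-characteristic formula `φ_Δ` of the distribution `Δ`. -/
inductive CharD : {A : Type} → Wt (SCSP A) → Form A → Prop where
  | mk {A : Type} {Δ : Wt (SCSP A)} (n : ℕ) (s : Fin n → SCSP A) (φ : Fin n → Form A) :
      Function.Injective s →
      (∀ i, s i ∈ dsupp Δ) →
      (∀ t ∈ dsupp Δ, ∃ i, s i = t) →
      (∀ i, CharS (s i) (φ i)) →
      CharD Δ (.prob n (fun i => Δ (s i)) φ)
end

mutual
/-- `CharSL s ψ` : `ψ` is an L-characteristic formula `ψ_s` of the state `s`. -/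
inductive CharSL : {A : Type} → SCSP A → Form A → Prop where
  | noTau {A : Type} {s : SCSP A} (n : ℕ) (a : Fin n → A)
      (Δ : Fin n → Wt (SCSP A)) (φ : Fin n → Form A) :
      (∀ Θ, ¬ Step s none Θ) →
      (∀ i, Step s (some (a i)) (Δ i)) →
      (∀ b Θ, Step s (some b) Θ → ∃ i, a i = b ∧ Δ i = Θ) →
      (∀ i, CharDL (Δ i) (φ i)) →
      CharSL s (.conj n (fun i => .dia (a i) (φ i)))
  | tau {A : Type} {s : SCSP A} (n m : ℕ) (a : Fin n → A)
      (Δ : Fin n → Wt (SCSP A)) (φ : Fin n → Form A)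
      (Θs : Fin m → Wt (SCSP A)) (ψ : Fin m → Form A) :
      (∃ Θ, Step s none Θ) →
      (∀ i, Step s (some (a i)) (Δ i)) →
      (∀ b Θ, Step s (some b) Θ → ∃ i, a i = b ∧ Δ i = Θ) →
      (∀ j, Step s none (Θs j)) →
      (∀ Θ, Step s none Θ → ∃ j, Θs j = Θ) →
      (∀ i, CharDL (Δ i) (φ i)) →
      (∀ j, CharDL (Θs j) (ψ j)) →
      CharSL s (.conj (n+m) (Fin.append (fun i => .dia (a i) (φ i)) ψ))
/-- `CharDL Δ ψ` : `ψ` is an L-characteristic formula `ψ_Δ` of the distribution `Δ`. -/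
inductive CharDL : {A : Type} → Wt (SCSP A) → Form A → Prop where
  | mk {A : Type} {Δ : Wt (SCSP A)} (n : ℕ) (s : Fin n → SCSP A) (φ : Fin n → Form A) :
      Function.Injective s →
      (∀ i, s i ∈ dsupp Δ) →
      (∀ t ∈ dsupp Δ, ∃ i, s i = t) →
      (∀ i, CharSL (s i) (φ i)) →
      CharDL Δ (.prob n (fun i => Δ (s i)) φ)
end
/-! ### The sub-language nCSP and (in)equational theories -/

mutual
/-- Membership in `nCSP`: no parallel composition. -/
inductive PNoPar : {A : Type} → PCSP A → Prop where
  | st {A : Type} {s : SCSP A} : SNoPar s → PNoPar (.st s)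
  | pch {A : Type} {p : ℝ} {P Q : PCSP A} : PNoPar P → PNoPar Q → PNoPar (.pch p P Q)
inductive SNoPar : {A : Type} → SCSP A → Prop where
  | nil {A : Type} : SNoPar (SCSP.nil (A := A))
  | pre {A : Type} {a : A} {P} : PNoPar P → SNoPar (.pre a P)
  | ich {A : Type} {P Q : PCSP A} : PNoPar P → PNoPar Q → SNoPar (.ich P Q)
  | ech {A : Type} {s t : SCSP A} : SNoPar s → SNoPar t → SNoPar (.ech s t)
end

/-- Initial actions of a state-based term (`none` denotes τ). -/
def initsS {A : Type} : SCSP A → Set (Option A)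
  | .nil => ∅
  | .pre a _ => {some a}
  | .ich _ _ => {none}
  | .ech s t => initsS s ∪ initsS t
  | .par _ s t => initsS s ∪ initsS t

/-- Initial actions of a process term. -/
def initsP {A : Type} : PCSP A → Set (Option A)
  | .st s => initsS s
  | .pch _ P Q => initsP P ∪ initsP Q

/-- Derivability in the equational theory `=_E` of Figure 3. -/
inductive EqE {A : Type} : PCSP A → PCSP A → Prop where
  | refl (P) : EqE P P
  | symm {P Q} : EqE P Q → EqE Q P
  | trans {P Q R} : EqE P Q → EqE Q R → EqE P R
  | congPre (a : A) {P Q} : EqE P Q → EqE (.st (.pre a P)) (.st (.pre a Q))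
  | congIch {P₁ P₂ Q₁ Q₂} : EqE P₁ Q₁ → EqE P₂ Q₂ →
      EqE (.st (.ich P₁ P₂)) (.st (.ich Q₁ Q₂))
  | congEch {P₁ P₂ Q₁ Q₂} : EqE P₁ Q₁ → EqE P₂ Q₂ →
      EqE (echC P₁ P₂) (echC Q₁ Q₂)
  | congPch (p : ℝ) {P₁ P₂ Q₁ Q₂} : EqE P₁ Q₁ → EqE P₂ Q₂ →
      EqE (.pch p P₁ P₂) (.pch p Q₁ Q₂)
  | P1 (p : ℝ) (h₀ : 0 < p) (h₁ : p < 1) (P) : EqE (.pch p P P) P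
  | P2 (p : ℝ) (h₀ : 0 < p) (h₁ : p < 1) (P Q) :
      EqE (.pch p P Q) (.pch (1-p) Q P)
  | P3 (p q : ℝ) (hp₀ : 0 < p) (hp₁ : p < 1) (hq₀ : 0 < q) (hq₁ : q < 1) (P Q R) :
      EqE (.pch q (.pch p P Q) R)
          (.pch (p*q) P (.pch ((1-p)*q/(1-p*q)) Q R))
  | I1 (P) : EqE (.st (.ich P P)) P
  | I2 (P Q) : EqE (.st (.ich P Q)) (.st (.ich Q P))
  | I3 (P Q R) : EqE (.st (.ich (.st (.ich P Q)) R)) (.st (.ich P (.st (.ich Q R))))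
  | E1 (P) : EqE (echC P (.st .nil)) P
  | E2 (P Q) : EqE (echC P Q) (echC Q P)
  | E3 (P Q R) : EqE (echC (echC P Q) R) (echC P (echC Q R))
  | EI (a : A) (P Q) :
      EqE (echC (.st (.pre a P)) (.st (.pre a Q)))
          (.st (.ich (.st (.pre a P)) (.st (.pre a Q))))
  | D1 (p : ℝ) (h₀ : 0 < p) (h₁ : p < 1) (P Q R) :
      EqE (echC P (.pch p Q R)) (.pch p (echC P Q) (echC P R))
  | D2 (a : A) (P Q R) :
      EqE (echC (.st (.pre a P)) (.st (.ich Q R)))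
          (.st (.ich (echC (.st (.pre a P)) Q) (echC (.st (.pre a P)) R)))
  | D3 (P₁ P₂ Q₁ Q₂) :
      EqE (echC (.st (.ich P₁ P₂)) (.st (.ich Q₁ Q₂)))
          (.st (.ich
            (.st (.ich (echC P₁ (.st (.ich Q₁ Q₂))) (echC P₂ (.st (.ich Q₁ Q₂)))))
            (.st (.ich (echC (.st (.ich P₁ P₂)) Q₁) (echC (.st (.ich P₁ P₂)) Q₂)))))

/-- Derivability from the probabilistic axioms P1–P3 and D1 only (`=_prob`). -/
inductive EqProb {A : Type} : PCSP A → PCSP A → Prop where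
  | refl (P) : EqProb P P
  | symm {P Q} : EqProb P Q → EqProb Q P
  | trans {P Q R} : EqProb P Q → EqProb Q R → EqProb P R
  | congPre (a : A) {P Q} : EqProb P Q → EqProb (.st (.pre a P)) (.st (.pre a Q))
  | congIch {P₁ P₂ Q₁ Q₂} : EqProb P₁ Q₁ → EqProb P₂ Q₂ →
      EqProb (.st (.ich P₁ P₂)) (.st (.ich Q₁ Q₂))
  | congEch {P₁ P₂ Q₁ Q₂} : EqProb P₁ Q₁ → EqProb P₂ Q₂ →
      EqProb (echC P₁ P₂) (echC Q₁ Q₂)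
  | congPch (p : ℝ) {P₁ P₂ Q₁ Q₂} : EqProb P₁ Q₁ → EqProb P₂ Q₂ →
      EqProb (.pch p P₁ P₂) (.pch p Q₁ Q₂)
  | P1 (p : ℝ) (h₀ : 0 < p) (h₁ : p < 1) (P) : EqProb (.pch p P P) P
  | P2 (p : ℝ) (h₀ : 0 < p) (h₁ : p < 1) (P Q) :
      EqProb (.pch p P Q) (.pch (1-p) Q P)
  | P3 (p q : ℝ) (hp₀ : 0 < p) (hp₁ : p < 1) (hq₀ : 0 < q) (hq₁ : q < 1) (P Q R) :
      EqProb (.pch q (.pch p P Q) R)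
          (.pch (p*q) P (.pch ((1-p)*q/(1-p*q)) Q R))
  | D1 (p : ℝ) (h₀ : 0 < p) (h₁ : p < 1) (P Q R) :
      EqProb (echC P (.pch p Q R)) (.pch p (echC P Q) (echC P R))

mutual
/-- Normal forms. -/
inductive IsNF : {A : Type} → PCSP A → Prop where
  | pch {A : Type} {p : ℝ} {N₁ N₂ : PCSP A} : 0 < p → p < 1 →
      IsNF N₁ → IsNF N₂ → IsNF (.pch p N₁ N₂)
  | ich {A : Type} {N₁ N₂ : PCSP A} : IsNF N₁ → IsNF N₂ → IsNF (.st (.ich N₁ N₂))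
  | ext {A : Type} {s : SCSP A} : IsExtNF s → IsNF (.st s)
/-- External-choice normal forms `◻_{i∈I} a_i.N_i`. -/
inductive IsExtNF : {A : Type} → SCSP A → Prop where
  | nil {A : Type} : IsExtNF (SCSP.nil (A := A))
  | pre {A : Type} {a : A} {N} : IsNF N → IsExtNF (.pre a N)
  | ech {A : Type} {s t : SCSP A} : IsExtNF s → IsExtNF t → IsExtNF (.ech s t)
end

/-- Derivability in the inequational theory for may testing (`⊑_Emay`). -/
inductive LeMay {A : Type} : PCSP A → PCSP A → Prop where
  | ofEq {P Q} : EqE P Q → LeMay P Q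
  | trans {P Q R} : LeMay P Q → LeMay Q R → LeMay P R
  | congPre (a : A) {P Q} : LeMay P Q → LeMay (.st (.pre a P)) (.st (.pre a Q))
  | congIch {P₁ P₂ Q₁ Q₂} : LeMay P₁ Q₁ → LeMay P₂ Q₂ →
      LeMay (.st (.ich P₁ P₂)) (.st (.ich Q₁ Q₂))
  | congEch {P₁ P₂ Q₁ Q₂} : LeMay P₁ Q₁ → LeMay P₂ Q₂ →
      LeMay (echC P₁ P₂) (echC Q₁ Q₂)
  | congPch (p : ℝ) {P₁ P₂ Q₁ Q₂} : LeMay P₁ Q₁ → LeMay P₂ Q₂ →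
      LeMay (.pch p P₁ P₂) (.pch p Q₁ Q₂)
  | may0 (a b : A) (P Q) :
      LeMay (echC (.st (.pre a P)) (.st (.pre b Q)))
            (.st (.ich (.st (.pre a P)) (.st (.pre b Q))))
  | may0' (a b : A) (P Q) :
      LeMay (.st (.ich (.st (.pre a P)) (.st (.pre b Q))))
            (echC (.st (.pre a P)) (.st (.pre b Q)))
  | may1 (P Q) : LeMay P (.st (.ich P Q))
  | may2 (P) : LeMay (.st .nil) P
  | may3 (a : A) (p : ℝ) (h₀ : 0 < p) (h₁ : p < 1) (P Q) :
      LeMay (.st (.pre a (.pch p P Q))) (.pch p (.st (.pre a P)) (.st (.pre a Q)))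

/-- Derivability in the inequational theory for must testing (`⊑_Emust`). -/
inductive LeMust {A : Type} : PCSP A → PCSP A → Prop where
  | ofEq {P Q} : EqE P Q → LeMust P Q
  | trans {P Q R} : LeMust P Q → LeMust Q R → LeMust P R
  | congPre (a : A) {P Q} : LeMust P Q → LeMust (.st (.pre a P)) (.st (.pre a Q))
  | congIch {P₁ P₂ Q₁ Q₂} : LeMust P₁ Q₁ → LeMust P₂ Q₂ →
      LeMust (.st (.ich P₁ P₂)) (.st (.ich Q₁ Q₂))
  | congEch {P₁ P₂ Q₁ Q₂} : LeMust P₁ Q₁ → LeMust P₂ Q₂ →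
      LeMust (echC P₁ P₂) (echC Q₁ Q₂)
  | congPch (p : ℝ) {P₁ P₂ Q₁ Q₂} : LeMust P₁ Q₁ → LeMust P₂ Q₂ →
      LeMust (.pch p P₁ P₂) (.pch p Q₁ Q₂)
  | must1 (P Q) : LeMust (.st (.ich P Q)) Q
  | must2 (n : ℕ) (a : Fin (n+1) → A) (m : Fin (n+1) → ℕ)
      (p : (i : Fin (n+1)) → Fin (m i + 1) → ℝ)
      (Q : (i : Fin (n+1)) → Fin (m i + 1) → PCSP A)
      (P : (i : Fin (n+1)) → Fin (m i + 1) → PCSP A)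
      (R : PCSP A) :
      (∀ i j, 0 ≤ p i j) → (∀ i, ∑ j, p i j = 1) →
      initsP R ⊆ {α | ∃ i, α = some (a i)} →
      LeMust
        (.st (.ich R (ichFin n (fun i =>
          pchFin (m i) (p i) (fun j => echC (.st (.pre (a i) (Q i j))) (P i j))))))
        (.st (echFin n (fun i => .pre (a i) (pchFin (m i) (p i) (Q i)))))


section Distributions

variable {X Y : Type}

lemma isDist_of_finset {Δ : Wt X} (S : Finset X) (hnonneg : ∀ x, 0 ≤ Δ x)
    (hS : dsupp Δ ⊆ S) (hsum : ∑ x ∈ S, Δ x = 1) : IsDist Δ :=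
  ⟨hnonneg, S.finite_toSet.subset hS, by rwa [finsum_eq_sum_of_support_subset Δ hS]⟩

lemma IsDist.sum_eq_one {Δ : Wt X} (hΔ : IsDist Δ) {S : Finset X} (hS : dsupp Δ ⊆ S) :
    ∑ x ∈ S, Δ x = 1 := by
  rw [← finsum_eq_sum_of_support_subset Δ hS]
  exact hΔ.2.2

lemma mem_dsupp_dirac {x t : X} (ht : t ∈ dsupp (dirac x)) : t = x := by
  by_contra h
  simp_all [dsupp, dirac]

lemma isDist_dirac (x : X) : IsDist (dirac x) :=
  isDist_of_finset {x} (fun y => by unfold dirac; split_ifs <;> norm_num)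
    (fun _ ht => by simp [mem_dsupp_dirac ht]) (by simp [dirac])

lemma dsupp_convex_subset {p : ℝ} {Δ₁ Δ₂ : Wt X} :
    dsupp (fun x => p * Δ₁ x + (1 - p) * Δ₂ x) ⊆ dsupp Δ₁ ∪ dsupp Δ₂ := by
  intro x hx
  by_contra h
  simp_all [dsupp]

lemma IsDist.convex {Δ₁ Δ₂ : Wt X} (h₁ : IsDist Δ₁) (h₂ : IsDist Δ₂) {p : ℝ} (hp₀ : 0 ≤ p)
    (hp₁ : p ≤ 1) : IsDist fun x => p * Δ₁ x + (1 - p) * Δ₂ x := by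
  set S := h₁.2.1.toFinset ∪ h₂.2.1.toFinset
  have hS₁ : dsupp Δ₁ ⊆ S := fun x hx => by simp [S, hx]
  have hS₂ : dsupp Δ₂ ⊆ S := fun x hx => by simp [S, hx]
  refine isDist_of_finset S (fun x => by have := h₁.1 x; have := h₂.1 x; nlinarith)
    (dsupp_convex_subset.trans (Set.union_subset hS₁ hS₂)) ?_
  rw [Finset.sum_add_distrib, ← Finset.mul_sum, ← Finset.mul_sum, h₁.sum_eq_one hS₁,
    h₂.sum_eq_one hS₂]
  ring

lemma dmap_eq_sum (g : X → Y) {Δ : Wt X} {S : Finset X} (hS : dsupp Δ ⊆ S) (y : Y) :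
    dmap g Δ y = ∑ x ∈ S with g x = y, Δ x := by
  refine finsum_mem_eq_sum_of_inter_support_eq Δ (Set.ext fun x => ?_)
  simp only [Set.mem_inter_iff, Set.mem_ofPred_eq, Finset.coe_filter]
  exact ⟨fun h => ⟨⟨hS h.2, h.1⟩, h.2⟩, fun h => ⟨h.1.2, h.2⟩⟩

lemma exists_mem_dsupp_of_mem_dsupp_dmap {g : X → Y} {Δ : Wt X} {y : Y}
    (hy : y ∈ dsupp (dmap g Δ)) : ∃ x ∈ dsupp Δ, g x = y := by
  obtain ⟨x, hx, hΔx⟩ := exists_ne_zero_of_finsum_mem_ne_zero hy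
  exact ⟨x, hΔx, hx⟩

lemma IsDist.dmap {Δ : Wt X} (hΔ : IsDist Δ) (g : X → Y) : IsDist (dmap g Δ) := by
  set S := hΔ.2.1.toFinset
  have hS : dsupp Δ ⊆ S := fun x hx => by simp [S, hx]
  refine isDist_of_finset (S.image g)
    (fun y => by rw [dmap_eq_sum g hS]; exact Finset.sum_nonneg fun x _ => hΔ.1 x)
    (fun y hy => ?_) ?_
  · obtain ⟨x, hx, rfl⟩ := exists_mem_dsupp_of_mem_dsupp_dmap hy
    exact Finset.mem_image_of_mem g (hS hx)
  · simp_rw [dmap_eq_sum g hS]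
    rw [Finset.sum_fiberwise_of_maps_to fun x hx => Finset.mem_image_of_mem g hx]
    exact hΔ.sum_eq_one hS

lemma IsDist.prod {Δ₁ : Wt X} {Δ₂ : Wt Y} (h₁ : IsDist Δ₁) (h₂ : IsDist Δ₂) :
    IsDist fun q : X × Y => Δ₁ q.1 * Δ₂ q.2 := by
  set S₁ := h₁.2.1.toFinset
  set S₂ := h₂.2.1.toFinset
  have hS₁ : dsupp Δ₁ ⊆ S₁ := fun x hx => by simp [S₁, hx]
  have hS₂ : dsupp Δ₂ ⊆ S₂ := fun x hx => by simp [S₂, hx]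
  refine isDist_of_finset (S₁ ×ˢ S₂) (fun q => mul_nonneg (h₁.1 _) (h₂.1 _))
    (fun q hq => ?_) ?_
  · obtain ⟨hq₁, hq₂⟩ := mul_ne_zero_iff.mp hq
    exact Finset.mem_product.mpr ⟨hS₁ hq₁, hS₂ hq₂⟩
  · rw [Finset.sum_product, ← Finset.sum_mul_sum, h₁.sum_eq_one hS₁, h₂.sum_eq_one hS₂, one_mul]

lemma eq_sum_dirac {n : ℕ} {s : Fin n → X} {Δ : Wt X} (hinj : Function.Injective s)
    (hcov : ∀ t ∈ dsupp Δ, ∃ i, s i = t) : Δ = fun t => ∑ i, Δ (s i) * dirac (s i) t := by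
  funext t
  by_cases ht : t ∈ dsupp Δ
  · obtain ⟨i, rfl⟩ := hcov t ht
    rw [Finset.sum_eq_single i (fun j _ hji => by simp [dirac, hinj.ne hji.symm]) (by simp)]
    simp [dirac]
  · rw [Function.notMem_support.mp ht]
    exact (Finset.sum_eq_zero fun i _ => by
      unfold dirac; split_ifs with h <;> simp_all [dsupp]).symm

lemma IsDist.sum_comp_eq_one {n : ℕ} {s : Fin n → X} {Δ : Wt X} (hΔ : IsDist Δ)
    (hinj : Function.Injective s) (hrange : Set.range s = dsupp Δ) : ∑ i, Δ (s i) = 1 := by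
  rw [← Finset.sum_image fun i _ j _ h => hinj h]
  exact hΔ.sum_eq_one (by simp [hrange])

end Distributions

section Derivatives

variable {A : Type}

lemma sizeOf_lt_of_mem_dsupp_interp : ∀ {P : PCSP A} {t : SCSP A},
    t ∈ dsupp P.interp → sizeOf t < sizeOf P
  | .st s, t, ht => by
    rw [mem_dsupp_dirac ht]
    simp
  | .pch p P Q, t, ht => by
    simp only [PCSP.pch.sizeOf_spec]
    rcases dsupp_convex_subset ht with ht | ht <;>
      have := sizeOf_lt_of_mem_dsupp_interp ht <;> omega

lemma Step.sizeOf_lt {s : SCSP A} {α : Option A} {Δ : Wt (SCSP A)} (h : Step s α Δ)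
    {t : SCSP A} (ht : t ∈ dsupp Δ) : sizeOf t < sizeOf s := by
  induction h generalizing t with
  | pre a P | ichL P Q | ichR P Q =>
    have := sizeOf_lt_of_mem_dsupp_interp ht
    simp only [SCSP.pre.sizeOf_spec, SCSP.ich.sizeOf_spec]
    omega
  | echL _ ih | echR _ ih =>
    have := ih ht
    simp only [SCSP.ech.sizeOf_spec]
    omega
  | echTL _ ih | echTR _ ih | parL _ _ ih | parR _ _ ih =>
    obtain ⟨u, hu, rfl⟩ := exists_mem_dsupp_of_mem_dsupp_dmap ht
    have := ih hu
    simp only [SCSP.ech.sizeOf_spec, SCSP.par.sizeOf_spec]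
    omega
  | parS _ _ _ ih₁ ih₂ =>
    obtain ⟨q, hq, rfl⟩ := exists_mem_dsupp_of_mem_dsupp_dmap ht
    obtain ⟨hq₁, hq₂⟩ := mul_ne_zero_iff.mp hq
    have := ih₁ hq₁
    have := ih₂ hq₂
    simp only [SCSP.par.sizeOf_spec]
    omega

def IsDerivative (t s : SCSP A) : Prop :=
  ∃ α Δ, Step s α Δ ∧ t ∈ dsupp Δ

lemma wellFounded_isDerivative : WellFounded (IsDerivative (A := A)) :=
  Subrelation.wf (fun ⟨_, _, h, ht⟩ => h.sizeOf_lt ht) (measure sizeOf).wf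

end Derivatives

section WellFormed

variable {A : Type}

def IsWFDist (Δ : Wt (SCSP A)) : Prop :=
  IsDist Δ ∧ ∀ t ∈ dsupp Δ, SWF t

lemma IsWFDist.dmap {Δ : Wt (SCSP A)} (hΔ : IsWFDist Δ) {g : SCSP A → SCSP A}
    (hg : ∀ t, SWF t → SWF (g t)) : IsWFDist (dmap g Δ) := by
  refine ⟨hΔ.1.dmap g, fun t ht => ?_⟩
  obtain ⟨u, hu, rfl⟩ := exists_mem_dsupp_of_mem_dsupp_dmap ht
  exact hg u (hΔ.2 u hu)

lemma PWF.isWFDist_interp : ∀ {P : PCSP A}, PWF P → IsWFDist P.interp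
  | .st _, .st hs => ⟨isDist_dirac _, fun t ht => mem_dsupp_dirac ht ▸ hs⟩
  | .pch _ _ _, .pch hp₀ hp₁ hP hQ => by
    obtain ⟨hdP, hsP⟩ := hP.isWFDist_interp
    obtain ⟨hdQ, hsQ⟩ := hQ.isWFDist_interp
    exact ⟨hdP.convex hdQ hp₀.le hp₁.le,
      fun t ht => (dsupp_convex_subset ht).elim (hsP t) (hsQ t)⟩

lemma Step.isWFDist {s : SCSP A} {α : Option A} {Δ : Wt (SCSP A)} (h : Step s α Δ)
    (hs : SWF s) : IsWFDist Δ := by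
  induction h with
  | pre | ichL | ichR => cases hs; exact PWF.isWFDist_interp ‹_›
  | echL _ ih => cases hs with | ech h₁ _ => exact ih h₁
  | echR _ ih => cases hs with | ech _ h₂ => exact ih h₂
  | echTL _ ih => cases hs with | ech h₁ h₂ => exact (ih h₁).dmap fun t ht => .ech ht h₂
  | echTR _ ih => cases hs with | ech h₁ h₂ => exact (ih h₂).dmap fun t ht => .ech h₁ ht
  | parL _ _ ih => cases hs with | par h₁ h₂ => exact (ih h₁).dmap fun t ht => .par ht h₂
  | parR _ _ ih => cases hs with | par h₁ h₂ => exact (ih h₂).dmap fun t ht => .par h₁ ht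
  | parS _ _ _ ih₁ ih₂ =>
    cases hs with
    | par h₁ h₂ =>
      obtain ⟨hd₁, hs₁⟩ := ih₁ h₁
      obtain ⟨hd₂, hs₂⟩ := ih₂ h₂
      refine ⟨(hd₁.prod hd₂).dmap _, fun t ht => ?_⟩
      obtain ⟨q, hq, rfl⟩ := exists_mem_dsupp_of_mem_dsupp_dmap ht
      obtain ⟨hq₁, hq₂⟩ := mul_ne_zero_iff.mp hq
      exact .par (hs₁ _ hq₁) (hs₂ _ hq₂)

end WellFormed

section Transitions

variable {A : Type}

lemma finite_steps : ∀ s : SCSP A, {e : Option A × Wt (SCSP A) | Step s e.1 e.2}.Finite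
  | .nil => Set.finite_empty.subset fun _ h => by cases h
  | .pre a P => (Set.finite_singleton (some a, P.interp)).subset fun ⟨_, _⟩ h => by cases h; rfl
  | .ich P Q => ((Set.finite_singleton (none, Q.interp)).insert (none, P.interp)).subset
      fun ⟨_, _⟩ h => by cases h <;> simp
  | .ech s t =>
    (((finite_steps s).union (finite_steps t)).union
      (((finite_steps s).image fun e => (e.1, dmap (fun u => SCSP.ech u t) e.2)).union
        ((finite_steps t).image fun e => (e.1, dmap (fun u => SCSP.ech s u) e.2)))).subset <| by
        rintro ⟨α, Δ⟩ (h : Step _ α Δ)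
        cases h with
        | echL h => exact .inl (.inl h)
        | echR h => exact .inl (.inr h)
        | echTL h => exact .inr (.inl ⟨(none, _), h, rfl⟩)
        | echTR h => exact .inr (.inr ⟨(none, _), h, rfl⟩)
  | .par B s t =>
    ((((finite_steps s).image fun e => (e.1, dmap (fun u => SCSP.par B u t) e.2)).union
      ((finite_steps t).image fun e => (e.1, dmap (fun u => SCSP.par B s u) e.2))).union
      (Set.Finite.image2 (fun e₁ e₂ => (none, dmap (fun q : SCSP A × SCSP A => SCSP.par B q.1 q.2)
        fun q => e₁.2 q.1 * e₂.2 q.2)) (finite_steps s) (finite_steps t))).subset <| by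
        rintro ⟨α, Δ⟩ (h : Step _ α Δ)
        cases h with
        | parL h _ => exact .inl (.inl ⟨(_, _), h, rfl⟩)
        | parR h _ => exact .inl (.inr ⟨(_, _), h, rfl⟩)
        | parS _ h₁ h₂ => exact .inr ⟨(_, _), h₁, (_, _), h₂, rfl⟩

lemma exists_fin_enum_visible_steps (s : SCSP A) :
    ∃ (n : ℕ) (a : Fin n → A) (Δ : Fin n → Wt (SCSP A)), (∀ i, Step s (some (a i)) (Δ i)) ∧
      ∀ b Θ, Step s (some b) Θ → ∃ i, a i = b ∧ Δ i = Θ := by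
  have hfin : {e : A × Wt (SCSP A) | Step s (some e.1) e.2}.Finite :=
    (finite_steps s).preimage (f := fun e : A × Wt (SCSP A) => (some e.1, e.2))
      fun e _ e' _ h => by
        simp only [Prod.mk.injEq, Option.some.injEq] at h
        exact Prod.ext h.1 h.2
  obtain ⟨n, f, -, hrange⟩ := hfin.fin_param
  refine ⟨n, fun i => (f i).1, fun i => (f i).2, fun i => hrange.le ⟨i, rfl⟩, fun b Θ h => ?_⟩
  obtain ⟨i, hi⟩ := hrange.ge (show (b, Θ) ∈ _ from h)
  exact ⟨i, congrArg Prod.fst hi, congrArg Prod.snd hi⟩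

lemma exists_fin_enum_tau_steps (s : SCSP A) :
    ∃ (m : ℕ) (Θs : Fin m → Wt (SCSP A)), (∀ j, Step s none (Θs j)) ∧
      ∀ Θ, Step s none Θ → ∃ j, Θs j = Θ := by
  have hfin : {Θ : Wt (SCSP A) | Step s none Θ}.Finite :=
    (finite_steps s).preimage (f := fun Θ : Wt (SCSP A) => (none, Θ))
      fun _ _ _ _ h => (Prod.mk.inj h).2
  obtain ⟨m, Θs, -, hrange⟩ := hfin.fin_param
  exact ⟨m, Θs, fun j => hrange.le ⟨j, rfl⟩, fun Θ h => hrange.ge h⟩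

end Transitions

section Logic

variable {A : Type}

lemma Lift.dirac {R : SCSP A → Wt (SCSP A) → Prop} {s : SCSP A} {Φ : Wt (SCSP A)}
    (h : R s Φ) : Lift R (dirac s) Φ :=
  ⟨1, fun _ => 1, fun _ => s, fun _ => Φ, fun _ => zero_le_one, by simp, by simp, fun _ => h,
    by simp⟩

lemma Lift.mono {R R' : SCSP A → Wt (SCSP A) → Prop} (hR : ∀ s Θ, R s Θ → R' s Θ)
    {Δ Θ : Wt (SCSP A)} : Lift R Δ Θ → Lift R' Δ Θ
  | ⟨n, p, s, Φ, hp₀, hp₁, hΔ, hsΦ, hΘ⟩ => ⟨n, p, s, Φ, hp₀, hp₁, hΔ, fun i => hR _ _ (hsΦ i), hΘ⟩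

lemma tauStar_dirac_of_step {s : SCSP A} {Δ : Wt (SCSP A)} (h : Step s none Δ) :
    TauStar (dirac s) Δ :=
  .single (Lift.dirac (Or.inl h))

lemma weakA_dirac_of_step {s : SCSP A} {a : A} {Δ : Wt (SCSP A)} (h : Step s (some a) Δ) :
    WeakA a (dirac s) Δ :=
  ⟨_, _, .refl, Lift.dirac h, .refl⟩

lemma WeakA.tauStar_trans {a : A} {Δ Θ Θ' : Wt (SCSP A)} :
    WeakA a Δ Θ → TauStar Θ Θ' → WeakA a Δ Θ'
  | ⟨Δ₁, Δ₂, h₁, h₂, h₃⟩, h => ⟨Δ₁, Δ₂, h₁, h₂, h₃.trans h⟩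

lemma DRefuses.mono {Δ : Wt (SCSP A)} {X Y : Set A} (h : DRefuses Δ Y) (hXY : X ⊆ Y) :
    DRefuses Δ X :=
  fun s hs => ⟨(h s hs).1, fun a ha => (h s hs).2 a (hXY ha)⟩

lemma wff_conj_iff {n : ℕ} {φs : Fin n → Form A} : WFF (.conj n φs) ↔ ∀ i, WFF (φs i) :=
  ⟨fun | .conj h => h, .conj⟩

lemma sat_conj_iff {n : ℕ} {φs : Fin n → Form A} {Θ : Wt (SCSP A)} :
    Sat (.conj n φs) Θ ↔ ∀ i, Sat (φs i) Θ :=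
  ⟨fun | .conj h => h, .conj⟩

lemma wff_dia_iff {a : A} {φ : Form A} : WFF (.dia a φ) ↔ WFF φ :=
  ⟨fun | .dia h => h, .dia⟩

lemma sat_dia_iff {a : A} {φ : Form A} {Θ : Wt (SCSP A)} :
    Sat (.dia a φ) Θ ↔ ∃ Θ', WeakA a Θ Θ' ∧ Sat φ Θ' :=
  ⟨fun | .dia h h' => ⟨_, h, h'⟩, fun ⟨_, h, h'⟩ => .dia h h'⟩

lemma exists_tauStar_lift_of_sat_prob {n : ℕ} {s : Fin n → SCSP A} {φs : Fin n → Form A}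
    {Δ Θ : Wt (SCSP A)} {R : SCSP A → Wt (SCSP A) → Prop} (hinj : Function.Injective s)
    (hcov : ∀ t ∈ dsupp Δ, ∃ i, s i = t) (hw : WFF (.prob n (fun i => Δ (s i)) φs))
    (hsat : Sat (.prob n (fun i => Δ (s i)) φs) Θ)
    (hR : ∀ i Φ, WFF (φs i) → Sat (φs i) Φ → R (s i) Φ) :
    ∃ Θ', TauStar Θ Θ' ∧ Lift R Δ Θ' := by
  cases hw with
  | prob hp₀ hp₁ hwφ =>
    cases hsat with
    | prob Θs hsatφ hτ =>
      exact ⟨_, hτ, n, _, s, Θs, hp₀, hp₁, eq_sum_dirac hinj hcov,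
        fun i => hR i _ (hwφ i) (hsatφ i), rfl⟩

lemma IsDist.exists_wff_prob {Δ : Wt (SCSP A)} (hΔ : IsDist Δ) {C : SCSP A → Form A → Prop}
    (h : ∀ t ∈ dsupp Δ, ∃ φ, C t φ ∧ WFF φ) :
    ∃ (n : ℕ) (s : Fin n → SCSP A) (φs : Fin n → Form A), Function.Injective s ∧
      (∀ i, s i ∈ dsupp Δ) ∧ (∀ t ∈ dsupp Δ, ∃ i, s i = t) ∧ (∀ i, C (s i) (φs i)) ∧
      WFF (.prob n (fun i => Δ (s i)) φs) := by
  obtain ⟨n, s, hinj, hrange⟩ := hΔ.2.1.fin_param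
  have hmem : ∀ i, s i ∈ dsupp Δ := fun i => hrange.le ⟨i, rfl⟩
  choose φs hC hw using fun i => h (s i) (hmem i)
  exact ⟨n, s, φs, hinj, hmem, fun t ht => hrange.ge ht, hC,
    .prob (fun i => hΔ.1 _) (hΔ.sum_comp_eq_one hinj hrange) hw⟩

end Logic

section CharacteristicL

variable {A : Type}

mutual
theorem CharSL.noRef {s : SCSP A} {φ : Form A} : CharSL s φ → NoRef φ
  | .noTau _ _ _ _ _ _ _ hφ => .conj fun i => .dia (hφ i).noRef
  | .tau _ _ _ _ _ _ _ _ _ _ _ _ hφ hψ =>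
    .conj <| (Fin.forall_fin_add _).mpr
      ⟨fun i => by simpa using (hφ i).noRef.dia, fun j => by simpa using (hψ j).noRef⟩
theorem CharDL.noRef {Δ : Wt (SCSP A)} {ψ : Form A} : CharDL Δ ψ → NoRef ψ
  | .mk _ _ _ _ _ _ hφ => .prob fun i => (hφ i).noRef
end

mutual
theorem CharSL.sat_dirac {s : SCSP A} {φ : Form A} : CharSL s φ → Sat φ (dirac s)
  | .noTau _ _ _ _ _ hstep _ hφ =>
    .conj fun i => .dia (weakA_dirac_of_step (hstep i)) ((hφ i).sat_of_tauStar .refl)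
  | .tau _ _ _ _ _ _ _ _ hstep _ htau _ hφ hψ =>
    .conj <| (Fin.forall_fin_add _).mpr
      ⟨fun i => by simpa using .dia (weakA_dirac_of_step (hstep i)) ((hφ i).sat_of_tauStar .refl),
        fun j => by simpa using (hψ j).sat_of_tauStar (tauStar_dirac_of_step (htau j))⟩
theorem CharDL.sat_of_tauStar {Δ Δ₀ : Wt (SCSP A)} {ψ : Form A} :
    CharDL Δ ψ → TauStar Δ₀ Δ → Sat ψ Δ₀
  | .mk _ s _ hinj _ hcov hφ, h =>
    .prob (fun i => dirac (s i)) (fun i => (hφ i).sat_dirac) (by rwa [← eq_sum_dirac hinj hcov])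
end

lemma exists_charDL {Δ : Wt (SCSP A)} (hΔ : IsDist Δ)
    (h : ∀ t ∈ dsupp Δ, ∃ φ, CharSL t φ ∧ WFF φ) : ∃ ψ, CharDL Δ ψ ∧ WFF ψ := by
  obtain ⟨n, s, φs, hinj, hmem, hcov, hC, hw⟩ := hΔ.exists_wff_prob h
  exact ⟨_, .mk n s φs hinj hmem hcov hC, hw⟩

lemma SWF.exists_charSL {s : SCSP A} (hs : SWF s) : ∃ φ, CharSL s φ ∧ WFF φ := by
  induction s using wellFounded_isDerivative.induction with | _ s ih => ?_
  have hchar : ∀ {α Δ}, Step s α Δ → ∃ ψ, CharDL Δ ψ ∧ WFF ψ := fun h =>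
    exists_charDL (h.isWFDist hs).1
      fun t ht => ih t ⟨_, _, h, ht⟩ ((h.isWFDist hs).2 t ht)
  obtain ⟨n, a, Δ, hstep, hcov⟩ := exists_fin_enum_visible_steps s
  obtain ⟨m, Θs, htau, htcov⟩ := exists_fin_enum_tau_steps s
  choose φ hφ hwφ using fun i => hchar (hstep i)
  choose ψ hψ hwψ using fun j => hchar (htau j)
  by_cases hτ : ∃ Θ, Step s none Θ
  · refine ⟨_, .tau n m a Δ φ Θs ψ hτ hstep hcov htau htcov hφ hψ, .conj ?_⟩
    exact (Fin.forall_fin_add _).mpr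
      ⟨fun i => by simpa using (hwφ i).dia, fun j => by simpa using hwψ j⟩
  · exact ⟨_, .noTau n a Δ φ (not_exists.mp hτ) hstep hcov hφ, .conj fun i => .dia (hwφ i)⟩

/-- Well-formedness of `φ` makes the weights of its probabilistic subformulas sum to one,
which lifting a relation to distributions requires. -/
def CharSimL (s : SCSP A) (Θ : Wt (SCSP A)) : Prop :=
  ∃ φ, CharSL s φ ∧ WFF φ ∧ Sat φ Θ

lemma CharDL.exists_tauStar_lift {Δ Θ : Wt (SCSP A)} {ψ : Form A} (hc : CharDL Δ ψ)
    (hw : WFF ψ) (hsat : Sat ψ Θ) : ∃ Θ', TauStar Θ Θ' ∧ Lift CharSimL Δ Θ' := by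
  cases hc with
  | mk n s φs hinj _ hcov hφ =>
    exact exists_tauStar_lift_of_sat_prob hinj hcov hw hsat fun i _ hw hs => ⟨_, hφ i, hw, hs⟩

lemma CharSL.exists_of_step_some {s : SCSP A} {φ : Form A} {Θ : Wt (SCSP A)} {a : A}
    {Δ : Wt (SCSP A)} (hc : CharSL s φ) (hw : WFF φ) (hsat : Sat φ Θ) (h : Step s (some a) Δ) :
    ∃ ψ, CharDL Δ ψ ∧ WFF (.dia a ψ) ∧ Sat (.dia a ψ) Θ := by
  cases hc with
  | noTau n _ _ _ _ _ hcov hφ =>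
    obtain ⟨i, rfl, rfl⟩ := hcov a Δ h
    exact ⟨_, hφ i, wff_conj_iff.mp hw i, sat_conj_iff.mp hsat i⟩
  | tau n m _ _ _ _ _ _ _ hcov _ _ hφ _ =>
    obtain ⟨i, rfl, rfl⟩ := hcov a Δ h
    have hwi := wff_conj_iff.mp hw (Fin.castAdd m i)
    have hsati := sat_conj_iff.mp hsat (Fin.castAdd m i)
    simp only [Fin.append_left] at hwi hsati
    exact ⟨_, hφ i, hwi, hsati⟩

lemma CharSL.exists_of_step_none {s : SCSP A} {φ : Form A} {Θ : Wt (SCSP A)}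
    {Δ : Wt (SCSP A)} (hc : CharSL s φ) (hw : WFF φ) (hsat : Sat φ Θ) (h : Step s none Δ) :
    ∃ ψ, CharDL Δ ψ ∧ WFF ψ ∧ Sat ψ Θ := by
  cases hc with
  | noTau _ _ _ _ hnone => exact absurd h (hnone Δ)
  | tau n m _ _ _ _ _ _ _ _ _ htcov _ hψ =>
    obtain ⟨j, rfl⟩ := htcov Δ h
    have hwj := wff_conj_iff.mp hw (Fin.natAdd n j)
    have hsatj := sat_conj_iff.mp hsat (Fin.natAdd n j)
    simp only [Fin.append_right] at hwj hsatj
    exact ⟨_, hψ j, hwj, hsatj⟩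

lemma isSimulation_charSimL : IsSimulation (CharSimL (A := A)) := by
  rintro s Θ (_ | a) Δ ⟨φ, hc, hw, hsat⟩ h
  · obtain ⟨ψ, hψ, hwψ, hsatψ⟩ := hc.exists_of_step_none hw hsat h
    exact hψ.exists_tauStar_lift hwψ hsatψ
  · obtain ⟨ψ, hψ, hwψ, hsatψ⟩ := hc.exists_of_step_some hw hsat h
    obtain ⟨Θ₁, hweak, hsat₁⟩ := sat_dia_iff.mp hsatψ
    obtain ⟨Θ', hτ, hlift⟩ := hψ.exists_tauStar_lift (wff_dia_iff.mp hwψ) hsat₁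
    exact ⟨Θ', hweak.tauStar_trans hτ, hlift⟩

end CharacteristicL

section CharacteristicF

variable {A : Type}

lemma sat_ref_dirac_of_stable {s : SCSP A} (hnone : ∀ Θ, ¬ Step s none Θ) :
    Sat (.ref {b | ∀ Θ, ¬ Step s (some b) Θ}) (dirac s) :=
  .ref .refl fun t ht => by
    obtain rfl := mem_dsupp_dirac ht
    exact ⟨hnone, fun _ hb => hb⟩

mutual
theorem CharS.sat_dirac {s : SCSP A} {φ : Form A} : CharS s φ → Sat φ (dirac s)
  | .noTau _ _ _ _ hnone hstep _ hφ =>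
    .conj <| Fin.forall_iff_castSucc.mpr
      ⟨by simpa using sat_ref_dirac_of_stable hnone,
        fun i => by
          simpa using .dia (weakA_dirac_of_step (hstep i)) ((hφ i).sat_of_tauStar .refl)⟩
  | .tau _ _ _ _ _ _ _ _ hstep _ htau _ hφ hψ =>
    .conj <| (Fin.forall_fin_add _).mpr
      ⟨fun i => by simpa using .dia (weakA_dirac_of_step (hstep i)) ((hφ i).sat_of_tauStar .refl),
        fun j => by simpa using (hψ j).sat_of_tauStar (tauStar_dirac_of_step (htau j))⟩
theorem CharD.sat_of_tauStar {Δ Δ₀ : Wt (SCSP A)} {ψ : Form A} :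
    CharD Δ ψ → TauStar Δ₀ Δ → Sat ψ Δ₀
  | .mk _ s _ hinj _ hcov hφ, h =>
    .prob (fun i => dirac (s i)) (fun i => (hφ i).sat_dirac) (by rwa [← eq_sum_dirac hinj hcov])
end

lemma exists_charD {Δ : Wt (SCSP A)} (hΔ : IsDist Δ)
    (h : ∀ t ∈ dsupp Δ, ∃ φ, CharS t φ ∧ WFF φ) : ∃ ψ, CharD Δ ψ ∧ WFF ψ := by
  obtain ⟨n, s, φs, hinj, hmem, hcov, hC, hw⟩ := hΔ.exists_wff_prob h
  exact ⟨_, .mk n s φs hinj hmem hcov hC, hw⟩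

lemma SWF.exists_charS {s : SCSP A} (hs : SWF s) : ∃ φ, CharS s φ ∧ WFF φ := by
  induction s using wellFounded_isDerivative.induction with | _ s ih => ?_
  have hchar : ∀ {α Δ}, Step s α Δ → ∃ ψ, CharD Δ ψ ∧ WFF ψ := fun h =>
    exists_charD (h.isWFDist hs).1
      fun t ht => ih t ⟨_, _, h, ht⟩ ((h.isWFDist hs).2 t ht)
  obtain ⟨n, a, Δ, hstep, hcov⟩ := exists_fin_enum_visible_steps s
  obtain ⟨m, Θs, htau, htcov⟩ := exists_fin_enum_tau_steps s
  choose φ hφ hwφ using fun i => hchar (hstep i)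
  choose ψ hψ hwψ using fun j => hchar (htau j)
  by_cases hτ : ∃ Θ, Step s none Θ
  · refine ⟨_, .tau n m a Δ φ Θs ψ hτ hstep hcov htau htcov hφ hψ, .conj ?_⟩
    exact (Fin.forall_fin_add _).mpr
      ⟨fun i => by simpa using (hwφ i).dia, fun j => by simpa using hwψ j⟩
  · refine ⟨_, .noTau n a Δ φ (not_exists.mp hτ) hstep hcov hφ, .conj ?_⟩
    exact Fin.forall_iff_castSucc.mpr ⟨by simpa using .ref, fun i => by simpa using (hwφ i).dia⟩

def CharSimF (s : SCSP A) (Θ : Wt (SCSP A)) : Prop :=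
  ∃ φ, CharS s φ ∧ WFF φ ∧ Sat φ Θ

lemma CharD.exists_tauStar_lift {Δ Θ : Wt (SCSP A)} {ψ : Form A} (hc : CharD Δ ψ)
    (hw : WFF ψ) (hsat : Sat ψ Θ) : ∃ Θ', TauStar Θ Θ' ∧ Lift CharSimF Δ Θ' := by
  cases hc with
  | mk n s φs hinj _ hcov hφ =>
    exact exists_tauStar_lift_of_sat_prob hinj hcov hw hsat fun i _ hw hs => ⟨_, hφ i, hw, hs⟩

lemma CharS.exists_of_step_some {s : SCSP A} {φ : Form A} {Θ : Wt (SCSP A)} {a : A}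
    {Δ : Wt (SCSP A)} (hc : CharS s φ) (hw : WFF φ) (hsat : Sat φ Θ) (h : Step s (some a) Δ) :
    ∃ ψ, CharD Δ ψ ∧ WFF (.dia a ψ) ∧ Sat (.dia a ψ) Θ := by
  cases hc with
  | noTau n _ _ _ _ _ hcov hφ =>
    obtain ⟨i, rfl, rfl⟩ := hcov a Δ h
    have hwi := wff_conj_iff.mp hw (Fin.castSucc i)
    have hsati := sat_conj_iff.mp hsat (Fin.castSucc i)
    simp only [Fin.snoc_castSucc] at hwi hsati
    exact ⟨_, hφ i, hwi, hsati⟩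
  | tau n m _ _ _ _ _ _ _ hcov _ _ hφ _ =>
    obtain ⟨i, rfl, rfl⟩ := hcov a Δ h
    have hwi := wff_conj_iff.mp hw (Fin.castAdd m i)
    have hsati := sat_conj_iff.mp hsat (Fin.castAdd m i)
    simp only [Fin.append_left] at hwi hsati
    exact ⟨_, hφ i, hwi, hsati⟩

lemma CharS.exists_of_step_none {s : SCSP A} {φ : Form A} {Θ : Wt (SCSP A)}
    {Δ : Wt (SCSP A)} (hc : CharS s φ) (hw : WFF φ) (hsat : Sat φ Θ) (h : Step s none Δ) :
    ∃ ψ, CharD Δ ψ ∧ WFF ψ ∧ Sat ψ Θ := by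
  cases hc with
  | noTau _ _ _ _ hnone => exact absurd h (hnone Δ)
  | tau n m _ _ _ _ _ _ _ _ _ htcov _ hψ =>
    obtain ⟨j, rfl⟩ := htcov Δ h
    have hwj := wff_conj_iff.mp hw (Fin.natAdd n j)
    have hsatj := sat_conj_iff.mp hsat (Fin.natAdd n j)
    simp only [Fin.append_right] at hwj hsatj
    exact ⟨_, hψ j, hwj, hsatj⟩

lemma CharS.exists_tauStar_refuses {s : SCSP A} {φ : Form A} {Θ : Wt (SCSP A)} {X : Set A}
    (hc : CharS s φ) (hsat : Sat φ Θ) (href : SRefuses s X) :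
    ∃ Θ', TauStar Θ Θ' ∧ DRefuses Θ' X := by
  cases hc with
  | tau _ _ _ _ _ _ _ hτ =>
    obtain ⟨_, hτ⟩ := hτ
    exact (href.1 _ hτ).elim
  | noTau n =>
    have hsatref := sat_conj_iff.mp hsat (Fin.last n)
    simp only [Fin.snoc_last] at hsatref
    cases hsatref with
    | ref hτ hrefΘ => exact ⟨_, hτ, hrefΘ.mono fun a ha => href.2 a ha⟩

lemma isFailureSim_charSimF : IsFailureSim (CharSimF (A := A)) := by
  refine ⟨?_, fun s Θ X ⟨φ, hc, _, hsat⟩ href => hc.exists_tauStar_refuses hsat href⟩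
  rintro s Θ (_ | a) Δ ⟨φ, hc, hw, hsat⟩ h
  · obtain ⟨ψ, hψ, hwψ, hsatψ⟩ := hc.exists_of_step_none hw hsat h
    exact hψ.exists_tauStar_lift hwψ hsatψ
  · obtain ⟨ψ, hψ, hwψ, hsatψ⟩ := hc.exists_of_step_some hw hsat h
    obtain ⟨Θ₁, hweak, hsat₁⟩ := sat_dia_iff.mp hsatψ
    obtain ⟨Θ', hτ, hlift⟩ := hψ.exists_tauStar_lift (wff_dia_iff.mp hwψ) hsat₁
    exact ⟨Θ', hweak.tauStar_trans hτ, hlift⟩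

end CharacteristicF

/-- Theorem 6.9: the logical preorders imply the simulation preorders. -/
theorem logical_implies_simulation (A : Type) [Fintype A]
    (P Q : PCSP A) (hP : PWF P) (hQ : PWF Q) :
    (LPre P Q → SimPre P Q) ∧ (FPre P Q → FSimPre P Q) := by
  refine ⟨fun hL => ?_, fun hF => ?_⟩
  · obtain ⟨hdist, hwf⟩ := hP.isWFDist_interp
    obtain ⟨ψ, hψ, hw⟩ := exists_charDL hdist fun t ht => (hwf t ht).exists_charSL
    have hsatQ : Sat ψ Q.interp := hL ψ hw hψ.noRef (hψ.sat_of_tauStar .refl)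
    obtain ⟨Θ, hτ, hlift⟩ := hψ.exists_tauStar_lift hw hsatQ
    exact ⟨Θ, hτ, hlift.mono fun _ _ h => ⟨_, isSimulation_charSimL, h⟩⟩
  · obtain ⟨hdist, hwf⟩ := hQ.isWFDist_interp
    obtain ⟨ψ, hψ, hw⟩ := exists_charD hdist fun t ht => (hwf t ht).exists_charS
    have hsatP : Sat ψ P.interp := hF ψ hw (hψ.sat_of_tauStar .refl)
    obtain ⟨Θ, hτ, hlift⟩ := hψ.exists_tauStar_lift hw hsatP
    exact ⟨Θ, hτ, hlift.mono fun _ _ h => ⟨_, isFailureSim_charSimF, h⟩⟩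

end PaperPCSP
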